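/- Non-decreasing bound under row extension: let P be an n_c × n_v matrix over ℕ and let P' be the (n_c+1) × (n_v+1) matrix obtained by appending a zero column to P and then appending a new row whose last entry is 1. Define d(M) for an m × n matrix M (n > m) as min* over S ⊆ [n], |S| = m+1, of ∑_{i∈S} perm(M_{S∖i}), where min* takes the minimum over nonzero values. If d(P) is finite and positive, then d(P') ≥ d(P). -/

import Mathlib

open Matrix BigOperators

def perm {ι : Type*} [Fintype ι] [DecidableEq ι] {R : Type*} [CommSemiring R]
    (A : Matrix ι ι R) : R :=
  ∑ σ : Equiv.Perm ι, ∏ j, A j (σ j)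

/-- `perm (M_{S∖i})`: the permanent of the `m × m` submatrix of `M` on the
columns `S ∖ {i}` taken in increasing order (junk value `0` if `S ∖ {i}` does
not have exactly `m` elements). -/
def permSub {m n : ℕ} (M : Matrix (Fin m) (Fin n) ℕ) (S : Finset (Fin n))
    (i : Fin n) : ℕ :=
  if h : (S.erase i).card = m then
    perm (M.submatrix id (fun a : Fin m => ((S.erase i).orderIsoOfFin h a : Fin n)))
  else 0

/-- `∑_{i ∈ S} perm (M_{S∖i})`. -/
def bsum {m n : ℕ} (M : Matrix (Fin m) (Fin n) ℕ) (S : Finset (Fin n)) : ℕ :=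
  ∑ i ∈ S, permSub M S i

/-- `d(M)`: the min* over all `S ⊆ [n]` with `|S| = m + 1` of
`∑_{i∈S} perm (M_{S∖i})`, taking the minimum only over the nonzero values
(`⊤` if all such sums are zero). -/
noncomputable def dbound {m n : ℕ} (M : Matrix (Fin m) (Fin n) ℕ) : ℕ∞ :=
  sInf {x : ℕ∞ | ∃ S : Finset (Fin n),
    S.card = m + 1 ∧ bsum M S ≠ 0 ∧ x = (bsum M S : ℕ∞)}

/-!
Every `(nc + 2)`-set `S'` of columns of `P'` with `bsum P' S' ≠ 0` is dominated by an
`(nc + 1)`-set `T` of columns of `P` with `0 < bsum P T ≤ bsum P' S'`. Expand each permanent of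
`P'` along its new row, or, when the new column is among the chosen ones, along that column,
which is zero except for the `1` in the corner:
* if `S' = T ∪ {new column}`, then `bsum P' S' = ∑_{j ∈ T} v j * perm (P_{T ∖ j}) + bsum P T`;
* otherwise `bsum P' S' = ∑_{j ∈ S'} v j * bsum P (S' ∖ j)`, and any nonzero term yields
  `T = S' ∖ j`.
-/

namespace Matrix
variable {R : Type*} [CommSemiring R]

theorem permanent_succ_column_zero {n : ℕ} (A : Matrix (Fin (n + 1)) (Fin (n + 1)) R) :
    A.permanent = ∑ i, A i 0 * (A.submatrix i.succAbove Fin.succ).permanent := by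
  rw [permanent, Finset.univ_perm_fin_succ, ← Finset.univ_product_univ]
  simp only [Finset.sum_map, Equiv.toEmbedding_apply, Finset.sum_product]
  refine Finset.sum_congr rfl fun i _ => Fin.cases ?_ (fun i => ?_) i
  · simp [permanent, Fin.prod_univ_succ, Equiv.Perm.decomposeFin_symm_apply_zero,
      Equiv.Perm.decomposeFin_symm_apply_succ, Finset.mul_sum]
  · rw [← permanent_permute_cols i.cycleRange, permanent, Finset.mul_sum]
    refine Finset.sum_congr rfl fun σ _ => ?_
    simp [Fin.prod_univ_succ, Equiv.Perm.decomposeFin_symm_apply_zero,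
      Equiv.Perm.decomposeFin_symm_apply_succ, Fin.succAbove_cycleRange]

theorem permanent_succ_column {n : ℕ} (A : Matrix (Fin (n + 1)) (Fin (n + 1)) R)
    (j : Fin (n + 1)) :
    A.permanent = ∑ i, A i j * (A.submatrix i.succAbove j.succAbove).permanent := by
  rw [← permanent_permute_rows j.cycleRange.symm, permanent_succ_column_zero]
  simp [submatrix_submatrix, Function.comp_def]

theorem permanent_succ_row {n : ℕ} (A : Matrix (Fin (n + 1)) (Fin (n + 1)) R)
    (i : Fin (n + 1)) :
    A.permanent = ∑ j, A i j * (A.submatrix i.succAbove j.succAbove).permanent := by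
  rw [← permanent_transpose, permanent_succ_column _ i]
  simp_rw [← permanent_transpose (A.submatrix _ _), transpose_submatrix, transpose_apply]

end Matrix

namespace Finset
variable {α β : Type*} [LinearOrder α] [LinearOrder β]

theorem orderEmbOfFin_map {f : α ↪ β} (hf : StrictMono f) (s : Finset α) {k : ℕ}
    (h : s.card = k) (h' : (s.map f).card = k) (i : Fin k) :
    (s.map f).orderEmbOfFin h' i = f (s.orderEmbOfFin h i) :=
  (congrFun (orderEmbOfFin_unique h' (f := f ∘ s.orderEmbOfFin h)
    (fun x => mem_map_of_mem _ (orderEmbOfFin_mem s h x))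
    (hf.comp (s.orderEmbOfFin h).strictMono)) i).symm

theorem sum_orderEmbOfFin {M : Type*} [AddCommMonoid M] (s : Finset α) {k : ℕ}
    (h : s.card = k) (f : α → M) : ∑ i, f (s.orderEmbOfFin h i) = ∑ x ∈ s, f x := by
  conv_rhs => rw [← map_orderEmbOfFin_univ s h, sum_map]
  rfl

variable [DecidableEq α]

theorem orderEmbOfFin_erase (s : Finset α) {k : ℕ} (h : s.card = k + 1) (c : Fin (k + 1))
    (h' : (s.erase (s.orderEmbOfFin h c)).card = k) (i : Fin k) :
    (s.erase (s.orderEmbOfFin h c)).orderEmbOfFin h' i = s.orderEmbOfFin h (c.succAbove i) := by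
  rw [← orderEmbOfFin_unique' h' (f := (Fin.succAboveOrderEmb c).trans (s.orderEmbOfFin h))
    fun x => mem_erase.2 ⟨fun hx => Fin.succAbove_ne c x ((s.orderEmbOfFin h).injective hx),
      orderEmbOfFin_mem s h _⟩]
  rfl

theorem orderEmbOfFin_insert_last {s : Finset α} {a : α} (ha : ∀ x ∈ s, x < a) {k : ℕ}
    (h : (insert a s).card = k + 1) : (insert a s).orderEmbOfFin h (Fin.last k) = a := by
  obtain ⟨j, hj⟩ : a ∈ Set.range ((insert a s).orderEmbOfFin h) := by simp
  refine le_antisymm ?_ <|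
    hj.symm.le.trans (((insert a s).orderEmbOfFin h).monotone (Fin.le_last j))
  rcases mem_insert.1 (orderEmbOfFin_mem _ h (Fin.last k)) with hl | hl
  · exact hl.le
  · exact (ha _ hl).le

theorem orderEmbOfFin_insert_castSucc {s : Finset α} {a : α} (ha : ∀ x ∈ s, x < a) {k : ℕ}
    (h : (insert a s).card = k + 1) (h' : s.card = k) (i : Fin k) :
    (insert a s).orderEmbOfFin h i.castSucc = s.orderEmbOfFin h' i := by
  rw [← orderEmbOfFin_unique' h' (f := Fin.castSuccOrderEmb.trans ((insert a s).orderEmbOfFin h))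
    fun x => ?_]
  · rfl
  have hne : (insert a s).orderEmbOfFin h x.castSucc ≠ a := fun hx =>
    (Fin.castSucc_lt_last x).ne <| ((insert a s).orderEmbOfFin h).injective <|
      hx.trans (orderEmbOfFin_insert_last ha h).symm
  exact (mem_insert.1 (orderEmbOfFin_mem _ h _)).resolve_left hne

end Finset

theorem perm_eq_permanent {ι R : Type*} [Fintype ι] [DecidableEq ι] [CommSemiring R]
    (A : Matrix ι ι R) : perm A = A.permanent :=
  permanent_transpose A

def permanentOnCols {m n : ℕ} {R : Type*} [CommSemiring R] (M : Matrix (Fin m) (Fin n) R)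
    (E : Finset (Fin n)) : R :=
  if h : E.card = m then (M.submatrix id (E.orderEmbOfFin h)).permanent else 0

theorem permanentOnCols_of_card_eq {m n : ℕ} {R : Type*} [CommSemiring R]
    (M : Matrix (Fin m) (Fin n) R) {E : Finset (Fin n)} (h : E.card = m) :
    permanentOnCols M E = (M.submatrix id (E.orderEmbOfFin h)).permanent :=
  dif_pos h

theorem permSub_eq_permanentOnCols {m n : ℕ} (M : Matrix (Fin m) (Fin n) ℕ)
    (S : Finset (Fin n)) (i : Fin n) : permSub M S i = permanentOnCols M (S.erase i) := by
  unfold permSub permanentOnCols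
  split_ifs
  · exact perm_eq_permanent _
  · rfl

section RowExtension

variable {nc nv : ℕ} {R : Type*} [CommSemiring R] {P : Matrix (Fin nc) (Fin nv) R}
  {v : Fin nv → R} {P' : Matrix (Fin (nc + 1)) (Fin (nv + 1)) R}

theorem permanentOnCols_map_castSucc
    (htop : ∀ (r : Fin nc) (c : Fin nv), P' r.castSucc c.castSucc = P r c)
    (hrow : ∀ c : Fin nv, P' (Fin.last nc) c.castSucc = v c)
    {E : Finset (Fin nv)} (hE : E.card = nc + 1) :
    permanentOnCols P' (E.map Fin.castSuccEmb) =
      ∑ j ∈ E, v j * permanentOnCols P (E.erase j) := by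
  have hE' : (E.map Fin.castSuccEmb).card = nc + 1 := by rw [Finset.card_map, hE]
  rw [permanentOnCols_of_card_eq P' hE', permanent_succ_row _ (Fin.last nc),
    ← Finset.sum_orderEmbOfFin E hE]
  refine Finset.sum_congr rfl fun c _ => ?_
  have hc : (E.erase (E.orderEmbOfFin hE c)).card = nc := by simp [hE]
  have hmap := Finset.orderEmbOfFin_map (f := Fin.castSuccEmb) Fin.strictMono_castSucc E hE hE'
  rw [permanentOnCols_of_card_eq P hc]
  simp only [submatrix_apply, id, hmap]
  congr 2
  · exact hrow _
  · ext r a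
    simp only [submatrix_apply, id, Fin.succAbove_last, Finset.orderEmbOfFin_erase, hmap]
    exact htop _ _

theorem permanentOnCols_insert_last_map_castSucc
    (htop : ∀ (r : Fin nc) (c : Fin nv), P' r.castSucc c.castSucc = P r c)
    (hzero : ∀ r : Fin nc, P' r.castSucc (Fin.last nv) = 0)
    (hone : P' (Fin.last nc) (Fin.last nv) = 1) (E : Finset (Fin nv)) :
    permanentOnCols P' (insert (Fin.last nv) (E.map Fin.castSuccEmb)) =
      permanentOnCols P E := by
  have hlt : ∀ x ∈ E.map Fin.castSuccEmb, x < Fin.last nv := by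
    simp only [Finset.mem_map]
    rintro _ ⟨x, -, rfl⟩
    exact Fin.castSucc_lt_last x
  have hcard : (insert (Fin.last nv) (E.map Fin.castSuccEmb)).card = E.card + 1 := by
    rw [Finset.card_insert_of_notMem fun h => (hlt _ h).false, Finset.card_map]
  by_cases hE : E.card = nc
  · rw [permanentOnCols_of_card_eq P' (hcard.trans (congrArg (· + 1) hE)),
      permanentOnCols_of_card_eq P hE, permanent_succ_column _ (Fin.last nc),
      Fin.sum_univ_castSucc]
    have hE' : (E.map Fin.castSuccEmb).card = nc := by rw [Finset.card_map, hE]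
    simp only [submatrix_apply, id, Finset.orderEmbOfFin_insert_last hlt, hzero, zero_mul,
      Finset.sum_const_zero, zero_add, hone, one_mul, Fin.succAbove_last]
    congr 1
    ext r a
    simp only [submatrix_apply, id, Finset.orderEmbOfFin_insert_castSucc hlt _ hE',
      Finset.orderEmbOfFin_map (f := Fin.castSuccEmb) Fin.strictMono_castSucc E hE]
    exact htop _ _
  · unfold permanentOnCols
    rw [dif_neg (by omega), dif_neg hE]

end RowExtension

theorem Fin.exists_map_castSucc_eq {n : ℕ} {U : Finset (Fin (n + 1))} (h : Fin.last n ∉ U) :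
    ∃ S : Finset (Fin n), S.map Fin.castSuccEmb = U := by
  refine ⟨U.preimage Fin.castSucc (Fin.castSucc_injective n).injOn, ?_⟩
  ext x
  induction x using Fin.lastCases with
  | last => simpa [Fin.castSucc_ne_last] using h
  | cast i => simp

section BSum

variable {nc nv : ℕ} {P : Matrix (Fin nc) (Fin nv) ℕ} {v : Fin nv → ℕ}
  {P' : Matrix (Fin (nc + 1)) (Fin (nv + 1)) ℕ}

theorem bsum_insert_last_map_castSucc
    (htop : ∀ (r : Fin nc) (c : Fin nv), P' r.castSucc c.castSucc = P r c)
    (hzero : ∀ r : Fin nc, P' r.castSucc (Fin.last nv) = 0)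
    (hrow : ∀ c : Fin nv, P' (Fin.last nc) c.castSucc = v c)
    (hone : P' (Fin.last nc) (Fin.last nv) = 1) {T : Finset (Fin nv)} (hT : T.card = nc + 1) :
    bsum P' (insert (Fin.last nv) (T.map Fin.castSuccEmb)) =
      ∑ j ∈ T, v j * permSub P T j + bsum P T := by
  have hl : Fin.last nv ∉ T.map Fin.castSuccEmb := by simp [Fin.castSucc_ne_last]
  rw [bsum, Finset.sum_insert hl, Finset.sum_map]
  congr 1
  · simp only [permSub_eq_permanentOnCols, Finset.erase_insert hl,
      permanentOnCols_map_castSucc htop hrow hT]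
  · refine Finset.sum_congr rfl fun j _ => ?_
    rw [permSub_eq_permanentOnCols, permSub_eq_permanentOnCols,
      Finset.erase_insert_of_ne (by simp [eq_comm, Fin.castSucc_ne_last]), ← Finset.map_erase,
      permanentOnCols_insert_last_map_castSucc htop hzero hone]

theorem bsum_map_castSucc
    (htop : ∀ (r : Fin nc) (c : Fin nv), P' r.castSucc c.castSucc = P r c)
    (hrow : ∀ c : Fin nv, P' (Fin.last nc) c.castSucc = v c) {S : Finset (Fin nv)}
    (hS : S.card = nc + 2) :
    bsum P' (S.map Fin.castSuccEmb) = ∑ j ∈ S, v j * bsum P (S.erase j) := by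
  calc bsum P' (S.map Fin.castSuccEmb)
      = ∑ i ∈ S, ∑ j ∈ S.erase i, v j * permanentOnCols P ((S.erase i).erase j) := by
        rw [bsum, Finset.sum_map]
        refine Finset.sum_congr rfl fun i hi => ?_
        rw [permSub_eq_permanentOnCols, ← Finset.map_erase,
          permanentOnCols_map_castSucc htop hrow (by simp [hi, hS])]
    _ = ∑ j ∈ S, ∑ i ∈ S.erase j, v j * permanentOnCols P ((S.erase j).erase i) := by
        rw [Finset.sum_comm' (t' := S) (s' := S.erase) fun i j => ?_]
        · refine Finset.sum_congr rfl fun j _ => Finset.sum_congr rfl fun i _ => ?_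
          rw [Finset.erase_right_comm]
        · simp only [Finset.mem_erase]
          tauto
    _ = ∑ j ∈ S, v j * bsum P (S.erase j) := by
        simp only [bsum, permSub_eq_permanentOnCols, Finset.mul_sum]

theorem exists_bsum_le_of_insert_last
    (htop : ∀ (r : Fin nc) (c : Fin nv), P' r.castSucc c.castSucc = P r c)
    (hzero : ∀ r : Fin nc, P' r.castSucc (Fin.last nv) = 0)
    (hrow : ∀ c : Fin nv, P' (Fin.last nc) c.castSucc = v c)
    (hone : P' (Fin.last nc) (Fin.last nv) = 1) {T : Finset (Fin nv)}
    (hcard : (insert (Fin.last nv) (T.map Fin.castSuccEmb)).card = nc + 2)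
    (hne : bsum P' (insert (Fin.last nv) (T.map Fin.castSuccEmb)) ≠ 0) :
    ∃ T' : Finset (Fin nv), T'.card = nc + 1 ∧ bsum P T' ≠ 0 ∧
      bsum P T' ≤ bsum P' (insert (Fin.last nv) (T.map Fin.castSuccEmb)) := by
  have hT : T.card = nc + 1 := by
    rw [Finset.card_insert_of_notMem (by simp [Fin.castSucc_ne_last]), Finset.card_map] at hcard
    omega
  rw [bsum_insert_last_map_castSucc htop hzero hrow hone hT] at hne ⊢
  refine ⟨T, hT, fun h0 => hne ?_, Nat.le_add_left _ _⟩
  rw [h0, add_zero]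
  exact Finset.sum_eq_zero fun j hj => by rw [Finset.sum_eq_zero_iff.1 h0 j hj, mul_zero]

theorem exists_bsum_le_of_map_castSucc
    (htop : ∀ (r : Fin nc) (c : Fin nv), P' r.castSucc c.castSucc = P r c)
    (hrow : ∀ c : Fin nv, P' (Fin.last nc) c.castSucc = v c) {S : Finset (Fin nv)}
    (hcard : (S.map Fin.castSuccEmb).card = nc + 2)
    (hne : bsum P' (S.map Fin.castSuccEmb) ≠ 0) :
    ∃ T : Finset (Fin nv), T.card = nc + 1 ∧ bsum P T ≠ 0 ∧
      bsum P T ≤ bsum P' (S.map Fin.castSuccEmb) := by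
  rw [Finset.card_map] at hcard
  rw [bsum_map_castSucc htop hrow hcard] at hne ⊢
  obtain ⟨j, hj, hjne⟩ := Finset.exists_ne_zero_of_sum_ne_zero hne
  refine ⟨S.erase j, by simp [hj, hcard], right_ne_zero_of_mul hjne, ?_⟩
  calc bsum P (S.erase j)
      ≤ v j * bsum P (S.erase j) :=
        Nat.le_mul_of_pos_left _ (Nat.pos_of_ne_zero (left_ne_zero_of_mul hjne))
    _ ≤ ∑ j ∈ S, v j * bsum P (S.erase j) :=
        Finset.single_le_sum (f := fun j => v j * bsum P (S.erase j)) (fun _ _ => Nat.zero_le _) hj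

end BSum

theorem dbound_le_of_forall_exists_bsum_le {m n m' n' : ℕ} (M : Matrix (Fin m) (Fin n) ℕ)
    (M' : Matrix (Fin m') (Fin n') ℕ)
    (h : ∀ S' : Finset (Fin n'), S'.card = m' + 1 → bsum M' S' ≠ 0 →
      ∃ S : Finset (Fin n), S.card = m + 1 ∧ bsum M S ≠ 0 ∧ bsum M S ≤ bsum M' S') :
    dbound M ≤ dbound M' := by
  unfold dbound
  refine le_sInf ?_
  rintro _ ⟨S', hS', hne, rfl⟩
  obtain ⟨S, hS, hne', hle⟩ := h S' hS' hne
  exact le_trans (sInf_le ⟨S, hS, hne', rfl⟩) (by exact_mod_cast hle)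

theorem dbound_mono_row_extension_general {nc nv : ℕ} (P : Matrix (Fin nc) (Fin nv) ℕ)
    (v : Fin nv → ℕ) (P' : Matrix (Fin (nc + 1)) (Fin (nv + 1)) ℕ)
    (htop : ∀ (r : Fin nc) (c : Fin nv), P' r.castSucc c.castSucc = P r c)
    (hzero : ∀ r : Fin nc, P' r.castSucc (Fin.last nv) = 0)
    (hrow : ∀ c : Fin nv, P' (Fin.last nc) c.castSucc = v c)
    (hone : P' (Fin.last nc) (Fin.last nv) = 1) :
    dbound P ≤ dbound P' := by
  refine dbound_le_of_forall_exists_bsum_le P P' fun S' hS' hne => ?_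
  by_cases hl : Fin.last nv ∈ S'
  · obtain ⟨T, hT⟩ := Fin.exists_map_castSucc_eq (S'.notMem_erase (Fin.last nv))
    rw [← Finset.insert_erase hl, ← hT] at hS' hne ⊢
    exact exists_bsum_le_of_insert_last htop hzero hrow hone hS' hne
  · obtain ⟨S, rfl⟩ := Fin.exists_map_castSucc_eq hl
    exact exists_bsum_le_of_map_castSucc htop hrow hS' hne

/-- Non-decreasing bound under row extension: extending `P` by a zero column and
then a new row whose last entry is `1` (and arbitrary entries `v` elsewhere)
cannot decrease the minimum-distance upper bound `d`. -/
theorem dbound_mono_row_extension {nc nv : ℕ} (P : Matrix (Fin nc) (Fin nv) ℕ)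
    (v : Fin nv → ℕ) (P' : Matrix (Fin (nc + 1)) (Fin (nv + 1)) ℕ)
    (htop : ∀ (r : Fin nc) (c : Fin nv), P' r.castSucc c.castSucc = P r c)
    (hzero : ∀ r : Fin nc, P' r.castSucc (Fin.last nv) = 0)
    (hrow : ∀ c : Fin nv, P' (Fin.last nc) c.castSucc = v c)
    (hone : P' (Fin.last nc) (Fin.last nv) = 1)
    (hfin : dbound P ≠ ⊤) (hpos : dbound P ≠ 0) :
    dbound P ≤ dbound P' :=
  dbound_mono_row_extension_general P v P' htop hzero hrow hone
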